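/- arXiv:2104.08411 — 2 statements merged into one kernel-verified Lean document; each statement's English description precedes it below -/
import Mathlib

section
/- Let g ∈ BMO^w on an interval J and define T_g(f) = ∫_J f(ξ) g(ξ) dλ(ξ) for f in the special atom space B¹. Then T_g is a bounded linear functional on B¹ with operator norm ‖T_g‖_{(B¹)*} ≤ ‖g‖_{BMO^w}. -/
open MeasureTheory ENNReal

/-- A (symmetric) interval `[x−h, x+h]` with `h > 0`. -/
def IsIntvl (I : Set ℝ) : Prop :=
  ∃ x h : ℝ, 0 < h ∧ I = Set.Icc (x - h) (x + h)

/-- A special atom supported in an interval contained in `J`: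
`b = (1/λ(I))(χ_R − χ_L)` where `I = [x−h,x+h] ⊆ J`, `R = [x,x+h]`, `L = [x−h,x)`. -/
def IsSpecialAtomOn (J : Set ℝ) (b : ℝ → ℝ) : Prop :=
  ∃ x h : ℝ, 0 < h ∧ Set.Icc (x - h) (x + h) ⊆ J ∧
    b = fun ξ => (1 / (2 * h)) *
      ((Set.Icc x (x + h)).indicator (fun _ => (1 : ℝ)) ξ -
       (Set.Ico (x - h) x).indicator (fun _ => (1 : ℝ)) ξ)

/-- The `B¹` norm: infimum of `Σ|cₙ|` over atomic decompositions `f = Σ cₙ bₙ`. -/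
noncomputable def B1Norm (J : Set ℝ) (f : ℝ → ℝ) : ℝ≥0∞ :=
  ⨅ (c : ℕ → ℝ) (b : ℕ → ℝ → ℝ)
    (_ : (∀ m, IsSpecialAtomOn J (b m)) ∧ Summable (fun m => |c m|) ∧
      ∀ ξ, HasSum (fun m => c m * b m ξ) (f ξ)),
    ENNReal.ofReal (∑' m, |c m|)

/-- The `BMO^w` norm over intervals: `‖g‖ = sup_I g_I + sup_I |⨍_I (g − g_I)|`. -/
noncomputable def BMOwNorm (g : ℝ → ℝ) : ℝ≥0∞ :=
  (⨆ (I : Set ℝ) (_ : IsIntvl I), ENNReal.ofReal |⨍ ξ in I, g ξ|) +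
  (⨆ (I : Set ℝ) (_ : IsIntvl I),
    ENNReal.ofReal |⨍ ξ in I, (g ξ - |⨍ η in I, g η|)|)

/-!
By Lebesgue differentiation, `|g|` is bounded almost everywhere by `sup_I |⨍_I g|`, the first
term of `‖g‖_{BMO^w}`. A special atom has `L¹` norm at most one, so every atomic decomposition
`f = Σ cₙ bₙ` gives `∫_J |f| ≤ Σ |cₙ|`, i.e. `∫_J |f| ≤ ‖f‖_{B¹}`. Hence
`|∫_J f g| ≤ ‖f‖_{B¹} sup_I |⨍_I g| ≤ ‖f‖_{B¹} ‖g‖_{BMO^w}`.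
-/

namespace IsSpecialAtomOn

variable {J : Set ℝ} {b : ℝ → ℝ}

lemma measurable (hb : IsSpecialAtomOn J b) : Measurable b := by
  obtain ⟨x, h, -, -, rfl⟩ := hb
  exact (((measurable_indicator_const_iff (1 : ℝ)).2 measurableSet_Icc).sub
    ((measurable_indicator_const_iff (1 : ℝ)).2 measurableSet_Ico)).const_mul _

lemma lintegral_enorm_le_one (hb : IsSpecialAtomOn J b) : ∫⁻ ξ, ‖b ξ‖ₑ ≤ 1 := by
  obtain ⟨x, h, hh, -, rfl⟩ := hb
  set I := Set.Icc (x - h) (x + h)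
  have hpt : ∀ ξ, ‖(1 / (2 * h)) * ((Set.Icc x (x + h)).indicator (fun _ => (1 : ℝ)) ξ -
      (Set.Ico (x - h) x).indicator (fun _ => (1 : ℝ)) ξ)‖ₑ ≤
      I.indicator (fun _ => ‖1 / (2 * h)‖ₑ) ξ := by
    intro ξ
    by_cases hR : ξ ∈ Set.Icc x (x + h)
    · have hI : ξ ∈ I := ⟨by linarith [hR.1], hR.2⟩
      have hL : ξ ∉ Set.Ico (x - h) x := fun hL => absurd hR.1 (not_le.2 hL.2)
      simp [hR, hL, hI, enorm_mul]
    by_cases hL : ξ ∈ Set.Ico (x - h) x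
    · have hI : ξ ∈ I := ⟨hL.1, by linarith [hL.2]⟩
      simp [hR, hL, hI, enorm_mul]
    · simp [hR, hL]
  calc ∫⁻ ξ, _ ≤ ∫⁻ ξ, I.indicator (fun _ => ‖1 / (2 * h)‖ₑ) ξ := lintegral_mono hpt
    _ = ENNReal.ofReal (1 / (2 * h)) * ENNReal.ofReal (2 * h) := by
      rw [lintegral_indicator_const measurableSet_Icc, Real.volume_Icc, Real.enorm_eq_ofReal_abs,
        abs_of_pos (by positivity)]
      ring_nf
    _ ≤ 1 := by
      rw [← ENNReal.ofReal_mul (by positivity), one_div_mul_cancel (by positivity), ofReal_one]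

end IsSpecialAtomOn

lemma setLIntegral_enorm_le_B1Norm (J : Set ℝ) (f : ℝ → ℝ) :
    ∫⁻ ξ in J, ‖f ξ‖ₑ ≤ B1Norm J f := by
  refine le_iInf₂ fun c b => le_iInf fun ⟨hb, hc, hf⟩ => ?_
  calc ∫⁻ ξ in J, ‖f ξ‖ₑ ≤ ∫⁻ ξ in J, ∑' m, ‖c m * b m ξ‖ₑ :=
        lintegral_mono fun ξ => (hf ξ).tsum_eq ▸ enorm_tsum_le_tsum_enorm
    _ = ∑' m, ‖c m‖ₑ * ∫⁻ ξ in J, ‖b m ξ‖ₑ := by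
        rw [lintegral_tsum fun m => ((hb m).measurable.const_mul (c m)).enorm.aemeasurable]
        simp_rw [enorm_mul]
        congr with m
        exact lintegral_const_mul _ (hb m).measurable.enorm
    _ ≤ ∑' m, ‖c m‖ₑ := ENNReal.tsum_le_tsum fun m => mul_le_of_le_one_right' <|
        (setLIntegral_le_lintegral _ _).trans (hb m).lintegral_enorm_le_one
    _ = ENNReal.ofReal (∑' m, |c m|) := by
        simp_rw [Real.enorm_eq_ofReal_abs]
        exact (ofReal_tsum_of_nonneg (fun _ => abs_nonneg _) hc).symm

/-- Lebesgue differentiation along the intervals `[x - r, x + r]`, `r → 0⁺`. -/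
lemma ae_enorm_le_iSup_abs_average {g : ℝ → ℝ} (hg : LocallyIntegrable g volume) :
    ∀ᵐ x, ‖g x‖ₑ ≤ ⨆ (I : Set ℝ) (_ : IsIntvl I), ENNReal.ofReal |⨍ ξ in I, g ξ| := by
  filter_upwards [IsUnifLocDoublingMeasure.ae_tendsto_average volume hg 1] with x hx
  have htend : Filter.Tendsto (fun r => ⨍ ξ in Metric.closedBall x r, g ξ)
      (nhdsWithin 0 (Set.Ioi 0)) (nhds (g x)) := by
    refine hx (fun _ => x) id Filter.tendsto_id ?_
    filter_upwards [self_mem_nhdsWithin] with r hr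
    simpa only [one_mul, id] using Metric.mem_closedBall_self (le_of_lt hr)
  rw [Real.enorm_eq_ofReal_abs]
  refine le_of_tendsto (ENNReal.tendsto_ofReal htend.abs) ?_
  filter_upwards [self_mem_nhdsWithin] with r hr
  exact le_iSup₂_of_le (f := fun (I : Set ℝ) (_ : IsIntvl I) => ENNReal.ofReal |⨍ ξ in I, g ξ|)
    _ ⟨x, r, hr, Real.closedBall_eq_Icc⟩ le_rfl

theorem stmt7_general (J : Set ℝ)
    (g : ℝ → ℝ) (hg : LocallyIntegrable g volume) (hgBMO : BMOwNorm g < ⊤)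
    (f : ℝ → ℝ) :
    ENNReal.ofReal |∫ ξ in J, f ξ * g ξ| ≤ B1Norm J f * BMOwNorm g := by
  set S := ⨆ (I : Set ℝ) (_ : IsIntvl I), ENNReal.ofReal |⨍ ξ in I, g ξ|
  have hS : S ≤ BMOwNorm g := le_self_add
  have hS_ne_top : S ≠ ⊤ := ne_top_of_le_ne_top hgBMO.ne hS
  calc ENNReal.ofReal |∫ ξ in J, f ξ * g ξ| = ‖∫ ξ in J, f ξ * g ξ‖ₑ :=
        (Real.enorm_eq_ofReal_abs _).symm
    _ ≤ ∫⁻ ξ in J, ‖f ξ‖ₑ * ‖g ξ‖ₑ := by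
        simpa only [enorm_mul] using enorm_integral_le_lintegral_enorm (fun ξ => f ξ * g ξ)
    _ ≤ ∫⁻ ξ in J, ‖f ξ‖ₑ * S := lintegral_mono_ae <|
        (ae_restrict_of_ae (ae_enorm_le_iSup_abs_average hg)).mono fun ξ hξ =>
          mul_le_mul_right hξ _
    _ = (∫⁻ ξ in J, ‖f ξ‖ₑ) * S := lintegral_mul_const' _ _ hS_ne_top
    _ ≤ B1Norm J f * BMOwNorm g := mul_le_mul' (setLIntegral_enorm_le_B1Norm J f) hS

/-- Hölder-type inequality: for `g ∈ BMO^w` the functional `T_g(f) = ∫_J f g` is bounded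
on the special atom space `B¹`, with `|T_g(f)| ≤ ‖f‖_{B¹} ‖g‖_{BMO^w}`;
hence `‖T_g‖_{(B¹)*} ≤ ‖g‖_{BMO^w}`. -/
theorem stmt7 (J : Set ℝ) (hJ : IsIntvl J)
    (g : ℝ → ℝ) (hg : LocallyIntegrable g volume) (hgBMO : BMOwNorm g < ⊤)
    (f : ℝ → ℝ) (hf : B1Norm J f < ⊤)
    (hint : IntegrableOn (fun ξ => f ξ * g ξ) J volume) :
    ENNReal.ofReal |∫ ξ in J, f ξ * g ξ| ≤ B1Norm J f * BMOwNorm g :=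
  stmt7_general J g hg hgBMO f
end

section
/- If g ∈ BMO^w on an interval J, then the distributional derivative pairing satisfies: for every x, h with I = [x−h, x+h] ⊆ J and special atom b = (1/(2h))(χ_{[x,x+h]} − χ_{[x−h,x)}), one has |∫_I b(ξ)(g(ξ) − g_I) dξ| ≤ ‖g‖_{BMO^w}; consequently sup_{I,h} |∫_I b g dλ| ≤ ‖g‖_{BMO^w}, which is the Zygmund-class Λ*-seminorm bound of an antiderivative of g: |G(x+h) + G(x−h) − 2G(x)|/(2h) ≤ ‖g‖_{BMO^w} where G′ = g. -/
open MeasureTheory ENNReal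

/-!
Pairing `g` with the special atom of `[x - h, x + h]` gives `(P - Q) / (2h)`, where `P` and `Q`
are the integrals of `g` over the right and left halves; this is also the second difference of
the antiderivative divided by `2h`. Both halves have length `h`, so the atom annihilates
constants, and `(P - Q) / (2h)` is half the difference of the averages of `g` over the two
halves, hence at most the larger of them, which is bounded by the first term of `‖g‖_{BMO^w}`.
-/

open Set intervalIntegral

noncomputable def specialAtom (x h : ℝ) : ℝ → ℝ := fun ξ => (1 / (2 * h)) *
  ((Icc x (x + h)).indicator (fun _ => (1 : ℝ)) ξ - (Ico (x - h) x).indicator (fun _ => 1) ξ)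

theorem setIntegral_specialAtom_mul {f : ℝ → ℝ} {x h : ℝ} (hh : 0 ≤ h)
    (hf : IntegrableOn f (Icc (x - h) (x + h))) :
    ∫ ξ in Icc (x - h) (x + h), specialAtom x h ξ * f ξ =
      ((∫ t in x..x + h, f t) - ∫ t in x - h..x, f t) / (2 * h) := by
  have hright : Icc x (x + h) ⊆ Icc (x - h) (x + h) := Icc_subset_Icc (by linarith) le_rfl
  have hleft : Ico (x - h) x ⊆ Icc (x - h) (x + h) :=
    Ico_subset_Icc_self.trans (Icc_subset_Icc le_rfl (by linarith))
  have hsplit : ∀ ξ, specialAtom x h ξ * f ξ =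
      (1 / (2 * h)) * ((Icc x (x + h)).indicator f ξ - (Ico (x - h) x).indicator f ξ) := by
    intro ξ
    by_cases h₁ : ξ ∈ Icc x (x + h) <;> by_cases h₂ : ξ ∈ Ico (x - h) x <;>
      simp [specialAtom, h₁, h₂]
  simp_rw [hsplit]
  rw [MeasureTheory.integral_const_mul,
    integral_sub (hf.indicator measurableSet_Icc) (hf.indicator measurableSet_Ico),
    setIntegral_indicator measurableSet_Icc, setIntegral_indicator measurableSet_Ico,
    inter_eq_right.mpr hright, inter_eq_right.mpr hleft, integral_Icc_eq_integral_Ioc,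
    integral_Ico_eq_integral_Ioc, ← integral_of_le (by linarith), ← integral_of_le (by linarith)]
  ring

theorem setIntegral_specialAtom_mul_sub_const {f : ℝ → ℝ} {x h : ℝ} (hh : 0 ≤ h)
    (hf : IntegrableOn f (Icc (x - h) (x + h))) (c : ℝ) :
    ∫ ξ in Icc (x - h) (x + h), specialAtom x h ξ * (f ξ - c) =
      ∫ ξ in Icc (x - h) (x + h), specialAtom x h ξ * f ξ := by
  have hfab : ∀ {a b}, x - h ≤ a → a ≤ b → b ≤ x + h → IntervalIntegrable f volume a b :=
    fun ha hab hb =>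
      (hf.mono_set (by rw [uIcc_of_le hab]; exact Icc_subset_Icc ha hb)).intervalIntegrable
  have hfc : IntegrableOn (fun ξ => f ξ - c) (Icc (x - h) (x + h)) :=
    hf.sub (integrableOn_const measure_Icc_lt_top.ne)
  rw [setIntegral_specialAtom_mul hh hfc, setIntegral_specialAtom_mul hh hf,
    integral_sub (hfab (by linarith) (by linarith) le_rfl) intervalIntegrable_const,
    integral_sub (hfab le_rfl (by linarith) (by linarith)) intervalIntegrable_const,
    intervalIntegral.integral_const, intervalIntegral.integral_const]
  ring

theorem abs_sub_div_two_le_max (p q : ℝ) : |(p - q) / 2| ≤ max |p| |q| := by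
  rw [abs_div, abs_two, div_le_iff₀ two_pos]
  linarith [abs_sub p q, le_max_left |p| |q|, le_max_right |p| |q|]

theorem ofReal_abs_intervalAverage_le_BMOwNorm (g : ℝ → ℝ) {a b : ℝ} (hab : a < b) :
    ENNReal.ofReal |⨍ t in a..b, g t| ≤ BMOwNorm g := by
  have hIntvl : IsIntvl (Icc a b) := ⟨(a + b) / 2, (b - a) / 2, by linarith, by congr 1 <;> ring⟩
  rw [uIoc_of_le hab.le, setAverage_congr Ioc_ae_eq_Icc]
  exact (le_iSup₂ (f := fun I (_ : IsIntvl I) => ENNReal.ofReal |⨍ ξ in I, g ξ|) _ hIntvl).trans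
    le_self_add

theorem ofReal_abs_symmetricDifferenceQuotient_le_BMOwNorm (g : ℝ → ℝ) (x : ℝ) {h : ℝ}
    (hh : 0 < h) :
    ENNReal.ofReal |((∫ t in x..x + h, g t) - ∫ t in x - h..x, g t) / (2 * h)| ≤ BMOwNorm g := by
  have hquot : ((∫ t in x..x + h, g t) - ∫ t in x - h..x, g t) / (2 * h) =
      ((⨍ t in x..x + h, g t) - ⨍ t in x - h..x, g t) / 2 := by
    rw [interval_average_eq_div, interval_average_eq_div]
    field_simp [hh.ne']
    ring
  rw [hquot]
  refine (ENNReal.ofReal_le_ofReal (abs_sub_div_two_le_max _ _)).trans ?_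
  rw [ENNReal.ofReal_max]
  exact max_le (ofReal_abs_intervalAverage_le_BMOwNorm g (by linarith))
    (ofReal_abs_intervalAverage_le_BMOwNorm g (by linarith))

theorem secondDifference_intervalIntegral {g : ℝ → ℝ} (hg : LocallyIntegrable g volume)
    (a x h : ℝ) :
    (∫ t in a..x + h, g t) + (∫ t in a..x - h, g t) - 2 * ∫ t in a..x, g t =
      (∫ t in x..x + h, g t) - ∫ t in x - h..x, g t := by
  have hii : ∀ a b, IntervalIntegrable g volume a b := fun a b =>
    (hg.integrableOn_isCompact isCompact_uIcc).intervalIntegrable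
  rw [← integral_interval_sub_left (hii a (x + h)) (hii a x),
    ← integral_interval_sub_left (hii a x) (hii a (x - h))]
  ring

theorem stmt19_general (a₀ : ℝ)
    (g : ℝ → ℝ) (hg : LocallyIntegrable g volume)
    (G : ℝ → ℝ) (hG : ∀ x, G x = ∫ t in a₀..x, g t)
    (x h : ℝ) (hh : 0 < h)
    (I : Set ℝ) (hI : I = Set.Icc (x - h) (x + h))
    (b : ℝ → ℝ)
    (hb : b = fun ξ => (1 / (2 * h)) *
      ((Set.Icc x (x + h)).indicator (fun _ => (1 : ℝ)) ξ -
       (Set.Ico (x - h) x).indicator (fun _ => (1 : ℝ)) ξ)) :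
    ENNReal.ofReal |∫ ξ in I, b ξ * (g ξ - |⨍ η in I, g η|)| ≤ BMOwNorm g ∧
    ENNReal.ofReal |∫ ξ in I, b ξ * g ξ| ≤ BMOwNorm g ∧
    ENNReal.ofReal (|G (x + h) + G (x - h) - 2 * G x| / (2 * h)) ≤ BMOwNorm g := by
  obtain rfl : b = specialAtom x h := hb
  subst hI
  have hgI : IntegrableOn g (Icc (x - h) (x + h)) := hg.integrableOn_isCompact isCompact_Icc
  have hbound := ofReal_abs_symmetricDifferenceQuotient_le_BMOwNorm g x hh
  refine ⟨?_, ?_, ?_⟩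
  · rwa [setIntegral_specialAtom_mul_sub_const hh.le hgI, setIntegral_specialAtom_mul hh.le hgI]
  · rwa [setIntegral_specialAtom_mul hh.le hgI]
  · rw [hG, hG, hG, secondDifference_intervalIntegral hg]
    rwa [abs_div, abs_of_pos (by positivity : (0 : ℝ) < 2 * h)] at hbound

/-- If `g ∈ BMO^w` on `J = [a₀, b₀]`, then for every interval `I = [x−h, x+h] ⊆ J` and
special atom `b = (1/(2h))(χ_{[x,x+h]} − χ_{[x−h,x)})`:
`|∫_I b (g − g_I)| ≤ ‖g‖_{BMO^w}`, `|∫_I b g| ≤ ‖g‖_{BMO^w}`, and the Zygmund-class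
bound `|G(x+h) + G(x−h) − 2G(x)|/(2h) ≤ ‖g‖_{BMO^w}` for the antiderivative
`G(x) = ∫_{a₀}^x g`. -/
theorem stmt19 (a₀ b₀ : ℝ) (hab : a₀ < b₀)
    (g : ℝ → ℝ) (hg : LocallyIntegrable g volume) (hgBMO : BMOwNorm g < ⊤)
    (G : ℝ → ℝ) (hG : ∀ x, G x = ∫ t in a₀..x, g t)
    (x h : ℝ) (hh : 0 < h) (hsub : Set.Icc (x - h) (x + h) ⊆ Set.Icc a₀ b₀)
    (I : Set ℝ) (hI : I = Set.Icc (x - h) (x + h))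
    (b : ℝ → ℝ)
    (hb : b = fun ξ => (1 / (2 * h)) *
      ((Set.Icc x (x + h)).indicator (fun _ => (1 : ℝ)) ξ -
       (Set.Ico (x - h) x).indicator (fun _ => (1 : ℝ)) ξ)) :
    ENNReal.ofReal |∫ ξ in I, b ξ * (g ξ - |⨍ η in I, g η|)| ≤ BMOwNorm g ∧
    ENNReal.ofReal |∫ ξ in I, b ξ * g ξ| ≤ BMOwNorm g ∧
    ENNReal.ofReal (|G (x + h) + G (x - h) - 2 * G x| / (2 * h)) ≤ BMOwNorm g :=
  stmt19_general a₀ g hg G hG x h hh I hI b hb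
end
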